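/- arXiv:math/0601087 — 3 statements merged into one kernel-verified Lean document; each statement's English description precedes it below -/
import Mathlib

section
/- Let λ be a regular uncountable cardinal and B a probability measure algebra. Given positive elements {b_i : i < λ} of B, there exist n < ω and a set X ∈ [λ]^λ such that μ(b_i) > 1/n for all i ∈ X and such that for no i ∈ X do λ many j ∈ X satisfy b_i ∧ b_j = 0. -/
open MeasureTheory Set Cardinal
open scoped ENNReal

universe u

/-- given λ regular uncountable and positive elements (bᵢ)_{i<λ} of a
probability measure algebra, there are n < ω and X ∈ [λ]^λ with μ(bᵢ) > 1/n for
i ∈ X and such that for no i ∈ X do λ many j ∈ X satisfy bᵢ ∧ bⱼ = 0. -/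
theorem stmt4 {X : Type u} [MeasurableSpace X] (μ : Measure X) [IsProbabilityMeasure μ]
    (lam : Cardinal.{u}) (hreg : lam.IsRegular) (hunc : ℵ₀ < lam)
    {ι : Type u} (hι : #ι = lam)
    (b : ι → Set X) (hb : ∀ i, MeasurableSet (b i)) (hpos : ∀ i, 0 < μ (b i)) :
    ∃ (n : ℕ) (J : Set ι), #J = lam ∧ (∀ i ∈ J, 1 / (n : ℝ≥0∞) < μ (b i)) ∧
      ∀ i ∈ J, #{j : ι | j ∈ J ∧ μ (b i ∩ b j) = 0} < lam := by
  classical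
  have hf : ∀ i : ι, ∃ n : ℕ, ((n : ℝ≥0∞))⁻¹ < μ (b i) := fun i =>
    ENNReal.exists_inv_nat_lt (hpos i).ne'
  choose f hfspec using hf
  -- find a fiber of full cardinality
  obtain ⟨n, hn⟩ : ∃ n : ℕ, #({i : ι | f i = n} : Set ι) = lam := by
    by_contra h
    push_neg at h
    have hlt : ∀ n : ℕ, #({i : ι | f i = n} : Set ι) < lam := fun n =>
      lt_of_le_of_ne (hι ▸ Cardinal.mk_set_le _) (h n)
    set g : ι → ULift.{u} ℕ := fun i => ⟨f i⟩ with hg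
    have key : #ι = Cardinal.sum fun y : ULift.{u} ℕ => #(g ⁻¹' {y}) := by
      rw [← Cardinal.mk_sigma]
      exact (Cardinal.mk_congr (Equiv.sigmaFiberEquiv g)).symm
    have hlt' : ∀ y : ULift.{u} ℕ, #(g ⁻¹' {y}) < lam := by
      intro y
      have : g ⁻¹' {y} = {i : ι | f i = y.down} := by
        ext i; simp [hg, ULift.ext_iff]
      rw [this]; exact hlt y.down
    have : #ι < lam := by
      rw [key]
      exact Cardinal.sum_lt_of_isRegular hreg (by simpa using hunc) hlt'
    exact absurd hι this.ne
  set I₀ : Set ι := {i : ι | f i = n} with hI₀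
  have hn0 : n ≠ 0 := by
    have : I₀.Nonempty := by
      rw [← Set.nonempty_coe_sort, ← Cardinal.mk_ne_zero_iff, hn]
      exact hreg.pos.ne'
    obtain ⟨i, hi⟩ := this
    intro h0
    have := hfspec i
    rw [show f i = n from hi, h0] at this
    simp at this
  -- main claim
  have main : ∃ J : Set ι, J ⊆ I₀ ∧ #J = lam ∧
      ∀ i ∈ J, #{j : ι | j ∈ J ∧ μ (b i ∩ b j) = 0} < lam := by
    by_contra H
    push_neg at H
    have hstep : ∀ J : Set ι, J ⊆ I₀ → #J = lam →
        ∃ p : ι × Set ι, p.1 ∈ J ∧ p.2 ⊆ J ∧ #p.2 = lam ∧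
          ∀ j ∈ p.2, μ (b p.1 ∩ b j) = 0 := by
      intro J hJ hc
      obtain ⟨i, hiJ, hge⟩ := H J hJ hc
      exact ⟨(i, {j | j ∈ J ∧ μ (b i ∩ b j) = 0}), hiJ, fun j hj => hj.1,
        le_antisymm (hι ▸ Cardinal.mk_set_le _) hge, fun j hj => hj.2⟩
    choose g hg1 hg2 hg3 hg4 using hstep
    let T := {J : Set ι // J ⊆ I₀ ∧ #J = lam}
    let step : T → T := fun J => ⟨(g J.1 J.2.1 J.2.2).2,
      fun x hx => J.2.1 (hg2 J.1 J.2.1 J.2.2 hx), hg3 J.1 J.2.1 J.2.2⟩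
    let F : ℕ → T := fun k => step^[k] ⟨I₀, subset_rfl, hn⟩
    let ii : ℕ → ι := fun k => (g (F k).1 (F k).2.1 (F k).2.2).1
    have hFsucc : ∀ k, F (k + 1) = step (F k) := fun k =>
      Function.iterate_succ_apply' step k _
    have hii_mem : ∀ k, ii k ∈ (F k).1 := fun k => hg1 _ _ _
    have hii_fib : ∀ k, f (ii k) = n := fun k => (F k).2.1 (hii_mem k)
    have hdisj : ∀ k, ∀ j ∈ (F (k + 1)).1, μ (b (ii k) ∩ b j) = 0 := by
      intro k j hj
      rw [hFsucc k] at hj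
      exact hg4 _ _ _ j hj
    have hmono : ∀ k, (F (k + 1)).1 ⊆ (F k).1 := by
      intro k x hx
      rw [hFsucc k] at hx
      exact hg2 _ _ _ hx
    have hmono' : ∀ l k, l ≤ k → (F k).1 ⊆ (F l).1 := by
      intro l k hlk
      induction hlk with
      | refl => exact subset_rfl
      | step h ih => exact fun _ hx => (ih (hmono _ hx) : _)
    have hpair : ∀ l k : ℕ, l < k → μ (b (ii l) ∩ b (ii k)) = 0 := by
      intro l k hlk
      exact hdisj l (ii k) (hmono' (l + 1) k hlk (hii_mem k))
    -- now derive a contradiction with measures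
    set c : Fin (n + 1) → Set X := fun k => b (ii k) with hc
    have hmeas : μ (⋃ k, c k) = ∑' k, μ (c k) := by
      apply measure_iUnion₀
      · intro k l hkl
        rcases hkl.lt_or_gt with h | h
        · exact hpair k l h
        · have := hpair l k h
          rwa [Set.inter_comm] at this
      · exact fun k => (hb _).nullMeasurableSet
    have hsum : (↑(n + 1) : ℝ≥0∞) * ((n : ℝ≥0∞))⁻¹ ≤ ∑' k, μ (c k) := by
      rw [tsum_fintype]
      calc (↑(n + 1) : ℝ≥0∞) * ((n : ℝ≥0∞))⁻¹
          = ∑ _k : Fin (n + 1), ((n : ℝ≥0∞))⁻¹ := by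
            simp [Finset.sum_const, mul_comm]
        _ ≤ ∑ k : Fin (n + 1), μ (c k) := by
            apply Finset.sum_le_sum
            intro k _
            have := hfspec (ii k)
            rw [hii_fib k] at this
            exact this.le
    have hub : ∑' k, μ (c k) ≤ 1 := by
      rw [← hmeas]
      exact prob_le_one
    have hgt : (1 : ℝ≥0∞) < (↑(n + 1) : ℝ≥0∞) * ((n : ℝ≥0∞))⁻¹ := by
      have hinv0 : ((n : ℝ≥0∞))⁻¹ ≠ 0 := ENNReal.inv_ne_zero.mpr (by simp)
      have : (↑(n + 1) : ℝ≥0∞) * ((n : ℝ≥0∞))⁻¹ = 1 + ((n : ℝ≥0∞))⁻¹ := by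
        push_cast
        rw [add_mul, one_mul, ENNReal.mul_inv_cancel (by exact_mod_cast hn0) (by simp)]
      rw [this]
      exact ENNReal.lt_add_right ENNReal.one_ne_top hinv0
    exact absurd (hsum.trans hub) (not_le.mpr hgt)
  obtain ⟨J, hJI, hJc, hJd⟩ := main
  refine ⟨n, J, hJc, ?_, hJd⟩
  intro i hi
  have := hfspec i
  rw [show f i = n from hJI hi] at this
  simpa [one_div] using this
end

section
/- Let m_2 denote Lebesgue measure (i.e., the fair coin-flipping product measure) on Cantor space squared, R² = 2^ω × 2^ω, and let B ⊆ R² be a Borel set of positive measure. Then there is a positive-measure Borel set A ⊆ R such that for every ε < 1 there is a positive-measure Borel set C ⊆ R with (m_2 ‖ (A × C))(B) > ε. -/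
/-!
The uniform measure on Cantor space is doubling, so Lebesgue's density theorem holds along the
cylinders `[y ↾ n]` of sequences that agree with `y` below `n`. Hence for a.e. `(x, y) ∈ B` the
vertical section `B_x` has density `1` at `y`, and by Fubini some `y₀` has a horizontal section
`A = {x | (x, y₀) ∈ B}` of positive measure such that this holds at `(x, y₀)` for a.e. `x ∈ A`.
The relative measure of `B` in `A × [y₀ ↾ n]` is the average over `A` of the relative measure of
`B_x` in `[y₀ ↾ n]`, which tends to `1` by dominated convergence; only the cylinder, not `A`,
depends on `ε`.
-/

open MeasureTheory Set Filter Metric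
open scoped ENNReal Topology

section Prod

variable {α β γ : Type*} [MeasurableSpace α] [MeasurableSpace β] [MeasurableSpace γ]
  {μ : Measure α} {ν : Measure β}

theorem measurable_measure_prodMk_inter_prodMk [SFinite ν] {B : Set (α × β)} {R : Set (γ × β)}
    (hB : MeasurableSet B) (hR : MeasurableSet R) :
    Measurable fun z : α × γ => ν (Prod.mk z.1 ⁻¹' B ∩ Prod.mk z.2 ⁻¹' R) :=
  measurable_measure_prodMk_left (s := {q : (α × γ) × β | (q.1.1, q.2) ∈ B ∧ (q.1.2, q.2) ∈ R})
    ((measurable_fst.fst.prodMk measurable_snd hB).inter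
      (measurable_fst.snd.prodMk measurable_snd hR))

theorem exists_measure_preimage_prodMk_right_ne_zero_of_ae_ae [SFinite μ] [SFinite ν]
    {B P : Set (α × β)} (hB : MeasurableSet B) (hP : MeasurableSet P) (hB0 : μ.prod ν B ≠ 0)
    (h : ∀ᵐ x ∂μ, ∀ᵐ y ∂ν, (x, y) ∈ B → (x, y) ∈ P) :
    ∃ y, μ ((·, y) ⁻¹' B) ≠ 0 ∧ ∀ᵐ x ∂μ, (x, y) ∈ B → (x, y) ∈ P := by
  have h_comm : ∀ᵐ y ∂ν, ∀ᵐ x ∂μ, (x, y) ∈ B → (x, y) ∈ P :=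
    (Measure.ae_ae_comm (p := fun x y => (x, y) ∈ B → (x, y) ∈ P)
      (by simp only [Prod.mk.eta, imp_iff_not_or]; exact hB.compl.union hP)).1 h
  have h_slice : ∃ᵐ y ∂ν, μ ((·, y) ⁻¹' B) ≠ 0 := by
    rw [Measure.prod_apply_symm hB, Ne,
      lintegral_eq_zero_iff (measurable_measure_prodMk_right hB)] at hB0
    simpa [Filter.EventuallyEq, Filter.not_eventually] using hB0
  exact (h_slice.and_eventually h_comm).exists

theorem Measure.prod_inter_prod_eq_setLIntegral [SFinite ν] {B : Set (α × β)}
    (hB : MeasurableSet B) {A : Set α} (hA : MeasurableSet A) {C : Set β} (hC : MeasurableSet C) :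
    μ.prod ν (B ∩ A ×ˢ C) = ∫⁻ x in A, ν (Prod.mk x ⁻¹' B ∩ C) ∂μ := by
  rw [Measure.prod_apply (hB.inter (hA.prod hC)), ← lintegral_indicator hA]
  refine lintegral_congr fun x => ?_
  by_cases hx : x ∈ A <;> simp [hx, Set.preimage, Set.inter_def]

theorem tendsto_measure_inter_prod_div [SFinite ν] {B : Set (α × β)} (hB : MeasurableSet B)
    {A : Set α} (hA : MeasurableSet A) (hA0 : μ A ≠ 0) (hA_top : μ A ≠ ∞)
    {C : ℕ → Set β} (hC : ∀ n, MeasurableSet (C n)) (hC0 : ∀ n, ν (C n) ≠ 0)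
    (hC_top : ∀ n, ν (C n) ≠ ∞)
    (h : ∀ᵐ x ∂μ, x ∈ A → Tendsto (fun n => ν (Prod.mk x ⁻¹' B ∩ C n) / ν (C n)) atTop (𝓝 1)) :
    Tendsto (fun n => μ.prod ν (B ∩ A ×ˢ C n) / μ.prod ν (A ×ˢ C n)) atTop (𝓝 1) := by
  set q : ℕ → α → ℝ≥0∞ := fun n x => ν (Prod.mk x ⁻¹' B ∩ C n) / ν (C n)
  have hq_meas : ∀ n, Measurable (q n) := fun n => by
    simpa [q, Set.preimage, Set.inter_def] using
      (measurable_measure_prodMk_left (ν := ν) (hB.inter (MeasurableSet.univ.prod (hC n)))).div_const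
        (ν (C n))
  have hq_le : ∀ n x, q n x ≤ 1 := fun n x =>
    ENNReal.div_le_of_le_mul (by rw [one_mul]; exact measure_mono inter_subset_right)
  have h_int : Tendsto (fun n => ∫⁻ x in A, q n x ∂μ) atTop (𝓝 (μ A)) := by
    simpa using tendsto_lintegral_of_dominated_convergence (μ := μ.restrict A) (f := 1) 1 hq_meas
      (fun n => ae_of_all _ (hq_le n)) (by simpa using hA_top) ((ae_restrict_iff' hA).2 h)
  have h_ratio : ∀ n, μ.prod ν (B ∩ A ×ˢ C n) / μ.prod ν (A ×ˢ C n)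
      = (∫⁻ x in A, q n x ∂μ) / μ A := fun n => by
    rw [Measure.prod_inter_prod_eq_setLIntegral hB hA (hC n), Measure.prod_prod,
      ← ENNReal.mul_div_mul_right _ (μ A) (hC0 n) (hC_top n), ← lintegral_mul_const _ (hq_meas n)]
    refine congrArg (· / _) (lintegral_congr fun x => ?_)
    exact (ENNReal.div_mul_cancel (hC0 n) (hC_top n)).symm
  simpa only [h_ratio, ENNReal.div_self hA0 hA_top] using
    ENNReal.Tendsto.div_const (b := μ A) h_int (.inl hA0)

end Prod

section CantorSpace

attribute [local instance] PiNat.metricSpace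

theorem closedBall_half_pow_eq_cylinder {E : ℕ → Type*} [∀ n, TopologicalSpace (E n)]
    [∀ n, DiscreteTopology (E n)] (x : ∀ n, E n) (n : ℕ) :
    closedBall x ((1 / 2) ^ n) = PiNat.cylinder x n := by
  ext y
  rw [mem_closedBall, PiNat.mem_cylinder_iff_dist_le]

theorem measurableSet_setOf_mem_cylinder {E : Type*} [MeasurableSpace E] [MeasurableEq E]
    (n : ℕ) : MeasurableSet {p : (ℕ → E) × (ℕ → E) | p.2 ∈ PiNat.cylinder p.1 n} := by
  simp only [PiNat.mem_cylinder_iff, ofPred_forall]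
  exact .iInter fun i => .iInter fun _ =>
    measurableSet_eq_fun ((measurable_pi_apply i).comp measurable_snd)
      ((measurable_pi_apply i).comp measurable_fst)

theorem measurableSet_cylinder {E : Type*} [MeasurableSpace E] [MeasurableEq E]
    (x : ℕ → E) (n : ℕ) : MeasurableSet (PiNat.cylinder x n) :=
  measurable_prodMk_left (measurableSet_setOf_mem_cylinder n)

variable {m : Measure (ℕ → Bool)}

theorem measure_cylinder_of_measure_setOf_forall_mem_eq
    (hm : ∀ (s : Finset ℕ) (f : ℕ → Bool),
      m {x | ∀ i ∈ s, x i = f i} = (2⁻¹ : ℝ≥0∞) ^ s.card)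
    (x : ℕ → Bool) (n : ℕ) : m (PiNat.cylinder x n) = 2⁻¹ ^ n := by
  convert hm (Finset.range n) x using 2
  · ext y
    simp [PiNat.mem_cylinder_iff]
  · simp

theorem isUnifLocDoublingMeasure_of_measure_cylinder
    (hm : ∀ x n, m (PiNat.cylinder x n) = 2⁻¹ ^ n) : IsUnifLocDoublingMeasure m := by
  refine ⟨⟨4, ?_⟩⟩
  filter_upwards [Ioo_mem_nhdsGT (by norm_num : (0 : ℝ) < 1 / 2)] with ε ⟨hε0, hε1⟩ x
  obtain ⟨n, hn_lt, hn_le⟩ := exists_nat_pow_near_of_lt_one (x := 2 * ε) (by linarith)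
    (by linarith) (by norm_num : (0 : ℝ) < 1 / 2) (by norm_num)
  have h_large : closedBall x (2 * ε) ⊆ PiNat.cylinder x n :=
    closedBall_half_pow_eq_cylinder x n ▸ closedBall_subset_closedBall hn_le
  have h_small : PiNat.cylinder x (n + 2) ⊆ closedBall x ε := by
    refine closedBall_half_pow_eq_cylinder x (n + 2) ▸ closedBall_subset_closedBall ?_
    rw [pow_succ _ (n + 1)]
    linarith
  calc m (closedBall x (2 * ε)) ≤ 2⁻¹ ^ n := hm x n ▸ measure_mono h_large
    _ = 2⁻¹ ^ n * (2 ^ 2 * (2 ^ 2)⁻¹) := by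
      rw [ENNReal.mul_inv_cancel (by norm_num) (by norm_num), mul_one]
    _ = 4 * 2⁻¹ ^ (n + 2) := by
      rw [ENNReal.inv_pow]
      ring
    _ ≤ 4 * m (closedBall x ε) := by
      grw [← hm x (n + 2), h_small]

theorem ae_tendsto_measure_inter_cylinder_div [IsFiniteMeasure m] [IsUnifLocDoublingMeasure m]
    (S : Set (ℕ → Bool)) :
    ∀ᵐ y ∂m, y ∈ S →
      Tendsto (fun n => m (S ∩ PiNat.cylinder y n) / m (PiNat.cylinder y n)) atTop (𝓝 1) := by
  have h_radius : Tendsto (fun n : ℕ => (1 / 2 : ℝ) ^ n) atTop (𝓝[>] 0) :=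
    tendsto_nhdsWithin_of_tendsto_nhds_of_eventually_within _
      (tendsto_pow_atTop_nhds_zero_of_lt_one (by norm_num) (by norm_num))
      (.of_forall fun n => mem_Ioi.2 (by positivity))
  refine ae_imp_of_ae_restrict ?_
  filter_upwards [IsUnifLocDoublingMeasure.ae_tendsto_measure_inter_div m S 1] with y hy
  simpa only [closedBall_half_pow_eq_cylinder] using
    hy (fun _ => y) _ h_radius (.of_forall fun n => mem_closedBall_self (by simp))

theorem measurableSet_setOf_tendsto_measure_inter_cylinder_div {α : Type*} [MeasurableSpace α]
    (m : Measure (ℕ → Bool)) [SFinite m] {B : Set (α × (ℕ → Bool))} (hB : MeasurableSet B) :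
    MeasurableSet {z : α × (ℕ → Bool) | Tendsto (fun n =>
      m (Prod.mk z.1 ⁻¹' B ∩ PiNat.cylinder z.2 n) / m (PiNat.cylinder z.2 n)) atTop (𝓝 1)} :=
  measurableSet_tendsto _ fun n =>
    (measurable_measure_prodMk_inter_prodMk hB (measurableSet_setOf_mem_cylinder n)).div
      ((measurable_measure_prodMk_left (measurableSet_setOf_mem_cylinder n)).comp measurable_snd)

end CantorSpace

/-- for the uniform measure m on Cantor space 2^ω (characterized by its
values on basic clopen cylinders) and a positive-measure Borel B ⊆ 2^ω × 2^ω, there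
is a positive Borel A such that for every ε < 1 there is a positive Borel C with
(m₂ ‖ (A × C))(B) > ε. -/
theorem stmt5 (m : Measure (ℕ → Bool)) [IsProbabilityMeasure m]
    (hm : ∀ (s : Finset ℕ) (f : ℕ → Bool),
      m {x | ∀ i ∈ s, x i = f i} = (2⁻¹ : ℝ≥0∞) ^ s.card)
    (B : Set ((ℕ → Bool) × (ℕ → Bool))) (hB : MeasurableSet B)
    (hBpos : 0 < (m.prod m) B) :
    ∃ A : Set (ℕ → Bool), MeasurableSet A ∧ 0 < m A ∧
      ∀ ε : ℝ≥0∞, ε < 1 → ∃ C : Set (ℕ → Bool), MeasurableSet C ∧ 0 < m C ∧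
        ε < (m.prod m) (B ∩ A ×ˢ C) / (m.prod m) (A ×ˢ C) := by
  have hcyl := measure_cylinder_of_measure_setOf_forall_mem_eq hm
  have hcyl0 : ∀ y n, m (PiNat.cylinder y n) ≠ 0 := fun y n => by simp [hcyl]
  have := isUnifLocDoublingMeasure_of_measure_cylinder hcyl
  obtain ⟨y, hA0, hA_dens⟩ := exists_measure_preimage_prodMk_right_ne_zero_of_ae_ae hB
    (measurableSet_setOf_tendsto_measure_inter_cylinder_div m hB) hBpos.ne'
    (ae_of_all _ fun x => ae_tendsto_measure_inter_cylinder_div (Prod.mk x ⁻¹' B))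
  have hA := measurable_prodMk_right (y := y) hB
  refine ⟨_, hA, pos_iff_ne_zero.2 hA0, fun ε hε => ?_⟩
  obtain ⟨n, hn⟩ := ((tendsto_measure_inter_prod_div hB hA hA0 (measure_ne_top _ _)
    (measurableSet_cylinder y) (hcyl0 y) (fun _ => measure_ne_top _ _) hA_dens).eventually
    (lt_mem_nhds hε)).exists
  exact ⟨_, measurableSet_cylinder y n, pos_iff_ne_zero.2 (hcyl0 y n), hn⟩
end

section
/- For each α in an index set u, let B_α ⊆ 2^ω be a Borel set of positive Lebesgue measure, and consider the pure local product measure ∏_{α∈u}(m ‖ B_α) on (2^ω)^u, where m is the uniform measure on Cantor space. Suppose two such pure product measures μ = ∏_{α∈u}(m‖B_α^μ) and ν = ∏_{α∈u'}(m‖B_α^ν) with v = u ∩ u' ≠ ∅ are not 'explicitly incompatible', meaning there is no Borel set C with support in v such that μ(C) = 0 and ν(C) = 1. Then for all but countably many α ∈ v, B_α^μ and B_α^ν are equal modulo m-null sets. -/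
open MeasureTheory Set
open scoped ENNReal

private lemma stmt13_aux_zero {ι : Type*} {u : Set ι}
    (m : Measure (ℕ → Bool)) (B : ι → Set (ℕ → Bool))
    (μ : Measure (u → ℕ → Bool))
    (hμ : ∀ (s : Finset u) (C : u → Set (ℕ → Bool)), (∀ α, MeasurableSet (C α)) →
      μ {x | ∀ α ∈ s, x α ∈ C α} = ∏ α ∈ s, (m (B α.1))⁻¹ * m (C α ∩ B α.1))
    (f : ℕ → u) (hf : Function.Injective f)
    (D : ι → Set (ℕ → Bool)) (hD : ∀ α, MeasurableSet (D α))
    (c : ℝ≥0∞) (hc : c < 1)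
    (hbound : ∀ k, (m (B (f k).1))⁻¹ * m (D (f k).1 ∩ B (f k).1) ≤ c) :
    μ {x | ∀ k, x (f k) ∈ D (f k).1} = 0 := by
  classical
  have key : ∀ N : ℕ, μ {x | ∀ k, x (f k) ∈ D (f k).1} ≤ c ^ N := by
    intro N
    have hsub : {x : u → ℕ → Bool | ∀ k, x (f k) ∈ D (f k).1} ⊆
        {x | ∀ α ∈ (Finset.range N).image f, x α ∈ D α.1} := by
      intro x hx α hα
      obtain ⟨k, _, rfl⟩ := Finset.mem_image.1 hα
      exact hx k
    have h1 := hμ ((Finset.range N).image f) (fun α => D α.1) (fun α => hD α.1)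
    have h2 : ∏ α ∈ (Finset.range N).image f, (m (B α.1))⁻¹ * m (D α.1 ∩ B α.1)
        ≤ ∏ _α ∈ (Finset.range N).image f, c := by
      refine Finset.prod_le_prod' fun α hα => ?_
      obtain ⟨k, _, rfl⟩ := Finset.mem_image.1 hα
      exact hbound k
    have h3 : ∏ _α ∈ (Finset.range N).image f, c = c ^ N := by
      rw [Finset.prod_const, Finset.card_image_of_injective _ hf, Finset.card_range]
    calc μ {x | ∀ k, x (f k) ∈ D (f k).1} ≤ μ {x | ∀ α ∈ (Finset.range N).image f, x α ∈ D α.1} :=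
          measure_mono hsub
      _ = _ := h1
      _ ≤ c ^ N := h3 ▸ h2
  have := ge_of_tendsto' (ENNReal.tendsto_pow_atTop_nhds_zero_of_lt_one hc) key
  exact le_antisymm this (zero_le)

private lemma stmt13_aux_one {ι : Type*} {u : Set ι}
    (m : Measure (ℕ → Bool)) (B : ι → Set (ℕ → Bool))
    (μ : Measure (u → ℕ → Bool)) [IsProbabilityMeasure μ]
    (hμ : ∀ (s : Finset u) (C : u → Set (ℕ → Bool)), (∀ α, MeasurableSet (C α)) →
      μ {x | ∀ α ∈ s, x α ∈ C α} = ∏ α ∈ s, (m (B α.1))⁻¹ * m (C α ∩ B α.1))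
    (f : ℕ → u)
    (D : ι → Set (ℕ → Bool)) (hD : ∀ α, MeasurableSet (D α))
    (hbound : ∀ k, (m (B (f k).1))⁻¹ * m (D (f k).1 ∩ B (f k).1) = 1) :
    μ {x | ∀ k, x (f k) ∈ D (f k).1} = 1 := by
  have hiff : {x : u → ℕ → Bool | ∀ k, x (f k) ∈ D (f k).1} =
      ⋂ k, (fun x : u → ℕ → Bool => x (f k)) ⁻¹' D (f k).1 := by
    ext x; simp [Set.mem_iInter]
  have hmeasA : ∀ k, MeasurableSet ((fun x : u → ℕ → Bool => x (f k)) ⁻¹' D (f k).1) :=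
    fun k => (measurable_pi_apply (f k)) (hD (f k).1)
  have hone : ∀ k, μ ((fun x : u → ℕ → Bool => x (f k)) ⁻¹' D (f k).1) = 1 := by
    intro k
    have h1 := hμ {f k} (fun α => D α.1) (fun α => hD α.1)
    have hset : {x : u → ℕ → Bool | ∀ α ∈ ({f k} : Finset u), x α ∈ D α.1} =
        (fun x : u → ℕ → Bool => x (f k)) ⁻¹' D (f k).1 := by
      ext x
      exact ⟨fun h => h (f k) (Finset.mem_singleton_self _),
        fun h α hα => by obtain rfl := Finset.mem_singleton.1 hα; exact h⟩
    rw [hset] at h1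
    rw [h1, Finset.prod_singleton, hbound k]
  rw [hiff, ← prob_compl_eq_zero_iff (MeasurableSet.iInter hmeasA)]
  rw [Set.compl_iInter]
  refine measure_iUnion_null fun k => ?_
  exact (prob_compl_eq_zero_iff (hmeasA k)).2 (hone k)

private lemma stmt13_aux_meas {ι : Type*} {v : Set ι}
    (B : ι → Set (ℕ → Bool)) (hB : ∀ α, MeasurableSet (B α)) (f : ℕ → ↥v) :
    MeasurableSet {y : ↥v → ℕ → Bool | ∀ k, y (f k) ∈ B (f k).1} := by
  have h : {y : ↥v → ℕ → Bool | ∀ k, y (f k) ∈ B (f k).1} =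
      ⋂ k, (fun y : ↥v → ℕ → Bool => y (f k)) ⁻¹' B (f k).1 := by
    ext y
    exact ⟨fun hy => Set.mem_iInter.2 fun k => hy k, fun hy k => Set.mem_iInter.1 hy k⟩
  rw [h]
  exact MeasurableSet.iInter fun k => (measurable_pi_apply _) (hB _)

/-- if two pure local product measures μ = ∏_{α∈u}(m‖B^μ_α) and
ν = ∏_{α∈u'}(m‖B^ν_α) with v = u ∩ u' ≠ ∅ are not explicitly incompatible (there is
no measurable set C supported on v with μ(C) = 0 and ν(C) = 1), then for all but
countably many α ∈ v the sets B^μ_α and B^ν_α agree modulo m-null sets. -/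
theorem stmt13 {ι : Type*} (u u' : Set ι) (hv : (u ∩ u').Nonempty)
    (m : Measure (ℕ → Bool)) [IsProbabilityMeasure m]
    (hm : ∀ (s : Finset ℕ) (f : ℕ → Bool),
      m {x | ∀ i ∈ s, x i = f i} = (2⁻¹ : ℝ≥0∞) ^ s.card)
    (Bμ Bν : ι → Set (ℕ → Bool))
    (hBμ : ∀ α, MeasurableSet (Bμ α)) (hBν : ∀ α, MeasurableSet (Bν α))
    (hBμpos : ∀ α, 0 < m (Bμ α)) (hBνpos : ∀ α, 0 < m (Bν α))
    (μ : Measure (u → ℕ → Bool)) (ν : Measure (u' → ℕ → Bool))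
    [IsProbabilityMeasure μ] [IsProbabilityMeasure ν]
    (hμ : ∀ (s : Finset u) (C : u → Set (ℕ → Bool)), (∀ α, MeasurableSet (C α)) →
      μ {x | ∀ α ∈ s, x α ∈ C α} = ∏ α ∈ s, (m (Bμ α.1))⁻¹ * m (C α ∩ Bμ α.1))
    (hν : ∀ (s : Finset u') (C : u' → Set (ℕ → Bool)), (∀ α, MeasurableSet (C α)) →
      ν {x | ∀ α ∈ s, x α ∈ C α} = ∏ α ∈ s, (m (Bν α.1))⁻¹ * m (C α ∩ Bν α.1))
    (hcompat : ¬ ∃ C : Set ((u ∩ u' : Set ι) → ℕ → Bool), MeasurableSet C ∧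
      μ ((fun (x : u → ℕ → Bool) (α : (u ∩ u' : Set ι)) => x ⟨α.1, α.2.1⟩) ⁻¹' C) = 0 ∧
      ν ((fun (x : u' → ℕ → Bool) (α : (u ∩ u' : Set ι)) => x ⟨α.1, α.2.2⟩) ⁻¹' C) = 1) :
    {α | α ∈ u ∩ u' ∧ m ((Bμ α \ Bν α) ∪ (Bν α \ Bμ α)) ≠ 0}.Countable := by
  classical
  set S1 : ℕ → Set ι := fun n =>
    {α | α ∈ u ∩ u' ∧ m (Bμ α ∩ Bν α) ≤ (1 - ((n : ℝ≥0∞) + 1)⁻¹) * m (Bμ α)} with hS1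
  set S2 : ℕ → Set ι := fun n =>
    {α | α ∈ u ∩ u' ∧ m (Bν α ∩ Bμ α) ≤ (1 - ((n : ℝ≥0∞) + 1)⁻¹) * m (Bν α)} with hS2
  have hlevel : ∀ (B B' : Set (ℕ → Bool)), MeasurableSet B' → m (B \ B') ≠ 0 →
      ∃ n : ℕ, m (B ∩ B') ≤ (1 - ((n : ℝ≥0∞) + 1)⁻¹) * m B := by
    intro B B' hB' hne
    obtain ⟨n, hn⟩ := ENNReal.exists_inv_nat_lt hne
    refine ⟨n, ?_⟩
    have hab : m (B ∩ B') + m (B \ B') = m B := measure_inter_add_diff B hB'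
    have hble : ((n : ℝ≥0∞) + 1)⁻¹ * m B ≤ m (B \ B') := by
      calc ((n : ℝ≥0∞) + 1)⁻¹ * m B ≤ (n : ℝ≥0∞)⁻¹ * 1 := by
            gcongr
            · exact le_self_add
            · exact prob_le_one
        _ ≤ m (B \ B') := by rw [mul_one]; exact hn.le
    have hsub : (1 - ((n : ℝ≥0∞) + 1)⁻¹) * m B = m B - ((n : ℝ≥0∞) + 1)⁻¹ * m B := by
      rw [ENNReal.sub_mul (fun _ _ => measure_ne_top m B), one_mul]
    rw [hsub]
    have h1 : m (B ∩ B') = m B - m (B \ B') := by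
      rw [← hab, ENNReal.add_sub_cancel_right (measure_ne_top m _)]
    rw [h1]
    exact tsub_le_tsub_left hble _
  have hc : ∀ n : ℕ, (1 : ℝ≥0∞) - ((n : ℝ≥0∞) + 1)⁻¹ < 1 := fun n =>
    ENNReal.sub_lt_self ENNReal.one_ne_top one_ne_zero (by simp)
  -- each S1 n is finite
  have hS1fin : ∀ n, (S1 n).Finite := by
    intro n
    by_contra hinf
    replace hinf : Set.Infinite (S1 n) := hinf
    obtain ⟨f, hfinj, hfS⟩ : ∃ f : ℕ → ι, Function.Injective f ∧ ∀ k, f k ∈ S1 n :=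
      ⟨fun k => (Set.Infinite.natEmbedding _ hinf k).1,
        fun j k h => (Set.Infinite.natEmbedding _ hinf).injective (Subtype.val_injective h),
        fun k => (Set.Infinite.natEmbedding _ hinf k).2⟩
    have hfv : ∀ k, f k ∈ u ∩ u' := fun k => (hfS k).1
    have hμ0 : μ ((fun (x : ↥u → ℕ → Bool) (α : ↥(u ∩ u')) => x ⟨α.1, α.2.1⟩) ⁻¹'
        {y : ↥(u ∩ u') → ℕ → Bool | ∀ k, y ⟨f k, hfv k⟩ ∈ Bν (f k)}) = 0 := by
      refine stmt13_aux_zero m Bμ μ hμ (fun k => (⟨f k, (hfv k).1⟩ : ↥u))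
        (fun j k h => hfinj (congrArg Subtype.val h)) Bν hBν _ (hc n) fun k => ?_
      have hmem := (hfS k).2
      have h0 : m (Bμ (f k)) ≠ 0 := (hBμpos _).ne'
      have htop : m (Bμ (f k)) ≠ ⊤ := measure_ne_top m _
      calc (m (Bμ (f k)))⁻¹ * m (Bν (f k) ∩ Bμ (f k))
          = (m (Bμ (f k)))⁻¹ * m (Bμ (f k) ∩ Bν (f k)) := by rw [Set.inter_comm]
        _ ≤ (m (Bμ (f k)))⁻¹ * ((1 - ((n : ℝ≥0∞) + 1)⁻¹) * m (Bμ (f k))) := by gcongr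
        _ = 1 - ((n : ℝ≥0∞) + 1)⁻¹ := by
            rw [mul_comm (1 - ((n : ℝ≥0∞) + 1)⁻¹), ← mul_assoc,
              ENNReal.inv_mul_cancel h0 htop, one_mul]
    have hν1 : ν ((fun (x : ↥u' → ℕ → Bool) (α : ↥(u ∩ u')) => x ⟨α.1, α.2.2⟩) ⁻¹'
        {y : ↥(u ∩ u') → ℕ → Bool | ∀ k, y ⟨f k, hfv k⟩ ∈ Bν (f k)}) = 1 := by
      refine stmt13_aux_one m Bν ν hν (fun k => (⟨f k, (hfv k).2⟩ : ↥u')) Bν hBν fun k => ?_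
      rw [Set.inter_self]
      exact ENNReal.inv_mul_cancel (hBνpos _).ne' (measure_ne_top m _)
    exact hcompat ⟨{y : ↥(u ∩ u') → ℕ → Bool | ∀ k, y ⟨f k, hfv k⟩ ∈ Bν (f k)},
      stmt13_aux_meas Bν hBν (fun k => ⟨f k, hfv k⟩), hμ0, hν1⟩
  -- each S2 n is finite
  have hS2fin : ∀ n, (S2 n).Finite := by
    intro n
    by_contra hinf
    replace hinf : Set.Infinite (S2 n) := hinf
    obtain ⟨f, hfinj, hfS⟩ : ∃ f : ℕ → ι, Function.Injective f ∧ ∀ k, f k ∈ S2 n :=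
      ⟨fun k => (Set.Infinite.natEmbedding _ hinf k).1,
        fun j k h => (Set.Infinite.natEmbedding _ hinf).injective (Subtype.val_injective h),
        fun k => (Set.Infinite.natEmbedding _ hinf k).2⟩
    have hfv : ∀ k, f k ∈ u ∩ u' := fun k => (hfS k).1
    have hμD : μ ((fun (x : ↥u → ℕ → Bool) (α : ↥(u ∩ u')) => x ⟨α.1, α.2.1⟩) ⁻¹'
        {y : ↥(u ∩ u') → ℕ → Bool | ∀ k, y ⟨f k, hfv k⟩ ∈ Bμ (f k)}) = 1 := by
      refine stmt13_aux_one m Bμ μ hμ (fun k => (⟨f k, (hfv k).1⟩ : ↥u)) Bμ hBμ fun k => ?_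
      rw [Set.inter_self]
      exact ENNReal.inv_mul_cancel (hBμpos _).ne' (measure_ne_top m _)
    have hνD : ν ((fun (x : ↥u' → ℕ → Bool) (α : ↥(u ∩ u')) => x ⟨α.1, α.2.2⟩) ⁻¹'
        {y : ↥(u ∩ u') → ℕ → Bool | ∀ k, y ⟨f k, hfv k⟩ ∈ Bμ (f k)}) = 0 := by
      refine stmt13_aux_zero m Bν ν hν (fun k => (⟨f k, (hfv k).2⟩ : ↥u'))
        (fun j k h => hfinj (congrArg Subtype.val h)) Bμ hBμ _ (hc n) fun k => ?_
      have hmem := (hfS k).2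
      have h0 : m (Bν (f k)) ≠ 0 := (hBνpos _).ne'
      have htop : m (Bν (f k)) ≠ ⊤ := measure_ne_top m _
      calc (m (Bν (f k)))⁻¹ * m (Bμ (f k) ∩ Bν (f k))
          = (m (Bν (f k)))⁻¹ * m (Bν (f k) ∩ Bμ (f k)) := by rw [Set.inter_comm]
        _ ≤ (m (Bν (f k)))⁻¹ * ((1 - ((n : ℝ≥0∞) + 1)⁻¹) * m (Bν (f k))) := by gcongr
        _ = 1 - ((n : ℝ≥0∞) + 1)⁻¹ := by
            rw [mul_comm (1 - ((n : ℝ≥0∞) + 1)⁻¹), ← mul_assoc,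
              ENNReal.inv_mul_cancel h0 htop, one_mul]
    have hDmeas : MeasurableSet
        {y : ↥(u ∩ u') → ℕ → Bool | ∀ k, y ⟨f k, hfv k⟩ ∈ Bμ (f k)} :=
      stmt13_aux_meas Bμ hBμ (fun k => ⟨f k, hfv k⟩)
    have hpremeas : MeasurableSet ((fun (x : ↥u → ℕ → Bool) (α : ↥(u ∩ u')) =>
        x ⟨α.1, α.2.1⟩) ⁻¹' {y : ↥(u ∩ u') → ℕ → Bool | ∀ k, y ⟨f k, hfv k⟩ ∈ Bμ (f k)}) :=
      hDmeas.preimage (measurable_pi_lambda _ fun α => measurable_pi_apply _)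
    have hpremeas' : MeasurableSet ((fun (x : ↥u' → ℕ → Bool) (α : ↥(u ∩ u')) =>
        x ⟨α.1, α.2.2⟩) ⁻¹' {y : ↥(u ∩ u') → ℕ → Bool | ∀ k, y ⟨f k, hfv k⟩ ∈ Bμ (f k)}) :=
      hDmeas.preimage (measurable_pi_lambda _ fun α => measurable_pi_apply _)
    refine hcompat ⟨{y : ↥(u ∩ u') → ℕ → Bool | ∀ k, y ⟨f k, hfv k⟩ ∈ Bμ (f k)}ᶜ,
      hDmeas.compl, ?_, ?_⟩
    · rw [Set.preimage_compl]
      exact (prob_compl_eq_zero_iff hpremeas).2 hμD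
    · rw [Set.preimage_compl]
      exact (prob_compl_eq_one_iff hpremeas').2 hνD
  -- conclude
  have hsub : {α | α ∈ u ∩ u' ∧ m ((Bμ α \ Bν α) ∪ (Bν α \ Bμ α)) ≠ 0} ⊆
      ⋃ n : ℕ, (S1 n ∪ S2 n) := by
    rintro α ⟨hαv, hαne⟩
    have hcases : m (Bμ α \ Bν α) ≠ 0 ∨ m (Bν α \ Bμ α) ≠ 0 := by
      by_contra h
      push_neg at h
      exact hαne (measure_union_null h.1 h.2)
    rcases hcases with h | h
    · obtain ⟨n, hn⟩ := hlevel (Bμ α) (Bν α) (hBν α) h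
      exact Set.mem_iUnion.2 ⟨n, Or.inl ⟨hαv, hn⟩⟩
    · obtain ⟨n, hn⟩ := hlevel (Bν α) (Bμ α) (hBμ α) h
      exact Set.mem_iUnion.2 ⟨n, Or.inr ⟨hαv, hn⟩⟩
  exact (Set.countable_iUnion fun n =>
    ((hS1fin n).countable.union (hS2fin n).countable)).mono hsub
end
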